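/- arXiv:2505.14908 — 2 statements merged into one kernel-verified Lean document; each statement's English description precedes it below -/
import Mathlib

section
/- Let H = H₁ ∨ H₂ where H₁ has l vertices and H₂ has n−l vertices with maximum degree d, and suppose λ(H) > d. If y is a Perron eigenvector of H normalized so its maximum entry is 1, then every entry of y at a vertex of H₂ is at most l/(λ(H) − d). Moreover, since K_{l,n−l} ⊆ H, this is at most l/(√(l(n−l)) − d) whenever √(l(n−l)) > d. -/
open scoped Classical

/-- The adjacency spectral radius (largest adjacency eigenvalue) of a finite simple graph. -/
noncomputable def specRad {V : Type*} [Fintype V] (G : SimpleGraph V) : ℝ :=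
  sSup {μ : ℝ | Module.End.HasEigenvalue (Matrix.toLin' (G.adjMatrix ℝ)) μ}

/-- The join `G ∨ H` of two graphs. -/
def graphJoin {α β : Type*} (G : SimpleGraph α) (H : SimpleGraph β) : SimpleGraph (α ⊕ β) where
  Adj x y :=
    match x, y with
    | Sum.inl a, Sum.inl b => G.Adj a b
    | Sum.inr a, Sum.inr b => H.Adj a b
    | Sum.inl _, Sum.inr _ => True
    | Sum.inr _, Sum.inl _ => True
  symm := by
    constructor
    rintro (a|a) (b|b) h
    · exact G.adj_symm h
    · trivial
    · trivial
    · exact H.adj_symm h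
  loopless := by
    constructor
    rintro (a|a) h
    · exact G.loopless.irrefl a h
    · exact H.loopless.irrefl a h

/-!
At a vertex of `H₂` where `y` is largest on `H₂`, the eigen-equation reads
`λ y_max = ∑_{H₁} y + ∑_{N(v)} y ≤ l + d y_max`, whence `y_max ≤ l / (λ - d)`.
For the second bound, the eigen-equation on each side of the join gives `l T ≤ λ S` and
`(n - l) S ≤ λ T` for the side sums `S`, `T` of `y`, so `l (n - l) ≤ λ²`.
-/

open Matrix SimpleGraph Finset

namespace SimpleGraph

variable {V R : Type*} [Fintype V] [Semiring R] [PartialOrder R] [IsOrderedRing R]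
  (G : SimpleGraph V) {x : V → R}

theorem adjMatrix_mulVec_nonneg (hx : ∀ u, 0 ≤ x u) (v : V) :
    0 ≤ (G.adjMatrix R *ᵥ x) v := by
  rw [adjMatrix_mulVec_apply]
  exact sum_nonneg fun u _ => hx u

theorem adjMatrix_mulVec_le_degree_mul {c : R} (hx : ∀ u, x u ≤ c) (v : V) :
    (G.adjMatrix R *ᵥ x) v ≤ G.degree v * c := by
  rw [adjMatrix_mulVec_apply, ← nsmul_eq_mul, ← card_neighborFinset_eq_degree]
  exact sum_le_card_nsmul _ _ _ fun u _ => hx u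

end SimpleGraph

theorem Fintype.card_mul_le_mul_sum {ι : Type*} [Fintype ι] {c μ : ℝ} {x : ι → ℝ}
    (h : ∀ i, c ≤ μ * x i) : Fintype.card ι * c ≤ μ * ∑ i, x i := by
  rw [mul_sum]
  simpa using card_nsmul_le_sum univ _ c fun i _ => h i

section Join

variable {α β : Type*} (G : SimpleGraph α) (H : SimpleGraph β)

@[simp] theorem graphJoin_adj_inl_inl (a a' : α) :
    (graphJoin G H).Adj (.inl a) (.inl a') ↔ G.Adj a a' :=
  Iff.rfl

@[simp] theorem graphJoin_adj_inr_inr (b b' : β) :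
    (graphJoin G H).Adj (.inr b) (.inr b') ↔ H.Adj b b' :=
  Iff.rfl

@[simp] theorem graphJoin_adj_inl_inr (a : α) (b : β) : (graphJoin G H).Adj (.inl a) (.inr b) :=
  trivial

@[simp] theorem graphJoin_adj_inr_inl (a : α) (b : β) : (graphJoin G H).Adj (.inr b) (.inl a) :=
  trivial

variable [Fintype α] [Fintype β] {R : Type*} [NonAssocSemiring R]

theorem graphJoin_adjMatrix_mulVec_inl (y : α ⊕ β → R) (a : α) :
    ((graphJoin G H).adjMatrix R *ᵥ y) (.inl a) =
      (G.adjMatrix R *ᵥ (y ∘ .inl)) a + ∑ b, y (.inr b) := by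
  simp [mulVec, dotProduct, Fintype.sum_sum_type, adjMatrix_apply]

theorem graphJoin_adjMatrix_mulVec_inr (y : α ⊕ β → R) (b : β) :
    ((graphJoin G H).adjMatrix R *ᵥ y) (.inr b) =
      ∑ a, y (.inl a) + (H.adjMatrix R *ᵥ (y ∘ .inr)) b := by
  simp [mulVec, dotProduct, Fintype.sum_sum_type, adjMatrix_apply]

variable {G H} {μ : ℝ} {y : α ⊕ β → ℝ}
  (hy : (graphJoin G H).adjMatrix ℝ *ᵥ y = μ • y)
include hy

theorem graphJoin_eigenvector_inr_le {d : ℕ} (hd : ∀ v, H.degree v ≤ d) (hμ : d < μ)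
    (hy₀ : ∀ v, 0 ≤ y v) (hy₁ : ∀ v, y v ≤ 1) (v : β) :
    y (.inr v) ≤ Fintype.card α / (μ - d) := by
  have : Nonempty β := ⟨v⟩
  obtain ⟨w, hw⟩ := Finite.exists_max (y ∘ .inr)
  have hsum : ∑ a, y (.inl a) ≤ Fintype.card α := by
    simpa using sum_le_card_nsmul univ _ 1 fun a _ => hy₁ (.inl a)
  have key : μ * y (.inr w) ≤ Fintype.card α + d * y (.inr w) :=
    calc μ * y (.inr w) = ∑ a, y (.inl a) + (H.adjMatrix ℝ *ᵥ (y ∘ .inr)) w := by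
          rw [← graphJoin_adjMatrix_mulVec_inr, hy]; rfl
      _ ≤ Fintype.card α + H.degree w * y (.inr w) :=
          add_le_add hsum (H.adjMatrix_mulVec_le_degree_mul hw w)
      _ ≤ Fintype.card α + d * y (.inr w) := by
          gcongr
          · exact hy₀ _
          · exact_mod_cast hd w
  calc y (.inr v) ≤ y (.inr w) := hw v
    _ ≤ Fintype.card α / (μ - d) := by
          rw [le_div_iff₀ (sub_pos.2 hμ)]
          linarith

theorem graphJoin_card_mul_card_le_sq (hpos : ∀ v, 0 < y v) :
    (Fintype.card α * Fintype.card β : ℝ) ≤ μ ^ 2 := by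
  rcases isEmpty_or_nonempty α with hα | hα
  · simp [sq_nonneg]
  rcases isEmpty_or_nonempty β with hβ | hβ
  · simp [sq_nonneg]
  set S := ∑ a, y (.inl a)
  set T := ∑ b, y (.inr b)
  have hS : 0 < S := sum_pos (fun a _ => hpos _) univ_nonempty
  have hT : 0 < T := sum_pos (fun b _ => hpos _) univ_nonempty
  have hαT : Fintype.card α * T ≤ μ * S := Fintype.card_mul_le_mul_sum fun a => by
    rw [← smul_eq_mul, ← Pi.smul_apply, ← hy, graphJoin_adjMatrix_mulVec_inl]
    exact le_add_of_nonneg_left (G.adjMatrix_mulVec_nonneg (fun _ => (hpos _).le) a)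
  have hβS : Fintype.card β * S ≤ μ * T := Fintype.card_mul_le_mul_sum fun b => by
    rw [← smul_eq_mul, ← Pi.smul_apply, ← hy, graphJoin_adjMatrix_mulVec_inr]
    exact le_add_of_nonneg_right (H.adjMatrix_mulVec_nonneg (fun _ => (hpos _).le) b)
  refine le_of_mul_le_mul_right ?_ (mul_pos hS hT)
  calc Fintype.card α * Fintype.card β * (S * T)
        = (Fintype.card α * T) * (Fintype.card β * S) := by ring
    _ ≤ (μ * S) * (μ * T) :=
        mul_le_mul hαT hβS (by positivity) ((by positivity : (0 : ℝ) ≤ _).trans hαT)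
    _ = μ ^ 2 * (S * T) := by ring

end Join

theorem perron_entry_bound_join_general {α β : Type*} [Fintype α] [Fintype β]
    (H₁ : SimpleGraph α) (H₂ : SimpleGraph β) (l n d : ℕ)
    (hα : Fintype.card α = l) (hβ : Fintype.card β = n - l) (hln : l ≤ n)
    (hd : ∀ v, H₂.degree v ≤ d)
    (hlam : (d : ℝ) < specRad (graphJoin H₁ H₂))
    (y : α ⊕ β → ℝ)
    (heig : ((graphJoin H₁ H₂).adjMatrix ℝ).mulVec y = specRad (graphJoin H₁ H₂) • y)
    (hpos : ∀ v, 0 < y v) (hle : ∀ v, y v ≤ 1) :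
    (∀ v : β, y (Sum.inr v) ≤ (l : ℝ) / (specRad (graphJoin H₁ H₂) - d)) ∧
    ((d : ℝ) < Real.sqrt ((l : ℝ) * ((n : ℝ) - l)) →
      ∀ v : β, y (Sum.inr v) ≤ (l : ℝ) / (Real.sqrt ((l : ℝ) * ((n : ℝ) - l)) - d)) := by
  have entry_le := fun v =>
    hα ▸ graphJoin_eigenvector_inr_le heig hd hlam (fun v => (hpos v).le) hle v
  refine ⟨entry_le, fun hs v => (entry_le v).trans ?_⟩
  have hcard : (l * (n - l) : ℝ) = Fintype.card α * Fintype.card β := by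
    rw [hα, hβ, Nat.cast_sub hln]
  have hsqrt : √(l * (n - l) : ℝ) ≤ specRad (graphJoin H₁ H₂) :=
    Real.sqrt_le_iff.2
      ⟨(Nat.cast_nonneg d).trans hlam.le, hcard ▸ graphJoin_card_mul_card_le_sq heig hpos⟩
  exact div_le_div_of_nonneg_left (Nat.cast_nonneg l) (by linarith) (by linarith)

/-- Let `H = H₁ ∨ H₂` where `H₁` has `l` vertices and `H₂` has `n − l` vertices with
maximum degree `d`, and suppose `λ(H) > d`.  If `y` is a Perron eigenvector of `H`
normalized so its maximum entry is `1`, then every entry of `y` at a vertex of `H₂` is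
at most `l / (λ(H) − d)`; moreover this is at most `l / (√(l(n−l)) − d)` whenever
`√(l(n−l)) > d`. -/
theorem perron_entry_bound_join {α β : Type*} [Fintype α] [Fintype β]
    (H₁ : SimpleGraph α) (H₂ : SimpleGraph β) (l n d : ℕ)
    (hα : Fintype.card α = l) (hβ : Fintype.card β = n - l) (hln : l ≤ n)
    (hd : ∀ v, H₂.degree v ≤ d)
    (hlam : (d : ℝ) < specRad (graphJoin H₁ H₂))
    (y : α ⊕ β → ℝ)
    (heig : ((graphJoin H₁ H₂).adjMatrix ℝ).mulVec y = specRad (graphJoin H₁ H₂) • y)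
    (hpos : ∀ v, 0 < y v) (hle : ∀ v, y v ≤ 1) (hmax : ∃ v, y v = 1) :
    (∀ v : β, y (Sum.inr v) ≤ (l : ℝ) / (specRad (graphJoin H₁ H₂) - d)) ∧
    ((d : ℝ) < Real.sqrt ((l : ℝ) * ((n : ℝ) - l)) →
      ∀ v : β, y (Sum.inr v) ≤ (l : ℝ) / (Real.sqrt ((l : ℝ) * ((n : ℝ) - l)) - d)) :=
  perron_entry_bound_join_general H₁ H₂ l n d hα hβ hln hd hlam y heig hpos hle
end

section
/- Let T be a tree with bipartition {A,B}, |A| = l+1 ≤ |B|, and suppose P ⊆ A with |P| = p is mapped into the side H₂ of a join H₁ ∨ H₂, where |V(H₁)| = l, Δ(H₂) ≤ δ−1, at most one vertex of H₂ has degree δ−1, and every vertex of A has degree at least δ in T. Then at least p vertices of N_T(P) must be mapped into V(H₁), and consequently p ≤ l. -/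
open scoped Classical

/-!
Root `T` at a vertex `r ∉ P` (one exists since `|A| ≤ |B|`). Each `u ∈ P` has at least
`deg u - 1 ≥ δ - 1` children, children of distinct vertices are distinct, and the parent of a
vertex of `P` closest to `r` is a further neighbour of `P`; so `|N_T(P)| ≥ p(δ - 1) + 1`.
The vertices of `N_T(P)` embedded in `H₂` are `H₂`-neighbours of the `p` distinct images of `P`,
whose degrees are at most `δ - 2` except for at most one of degree `δ - 1`; so there are at most
`p(δ - 1) + 1 - p` of them, and the remaining at least `p` neighbours lie in `H₁`.
-/

open Finset

theorem Finset.sum_add_card_le_card_mul_add_one {ι : Type*} (s : Finset ι) (g : ι → ℕ) {k : ℕ}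
    (hg : ∀ i ∈ s, g i ≤ k) (huniq : ∀ i ∈ s, ∀ j ∈ s, g i = k → g j = k → i = j) :
    ∑ i ∈ s, g i + #s ≤ #s * k + 1 := by
  have hterm : ∀ i ∈ s, g i + 1 ≤ k + if g i = k then 1 else 0 := by
    intro i hi
    have := hg i hi
    split_ifs <;> omega
  have hmax : #(s.filter fun i => g i = k) ≤ 1 :=
    card_le_one.2 fun i hi j hj => huniq i (mem_filter.1 hi).1 j (mem_filter.1 hj).1
      (mem_filter.1 hi).2 (mem_filter.1 hj).2
  calc ∑ i ∈ s, g i + #s = ∑ i ∈ s, (g i + 1) := by rw [sum_add_distrib, card_eq_sum_ones]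
    _ ≤ ∑ i ∈ s, (k + if g i = k then 1 else 0) := sum_le_sum hterm
    _ = #s * k + #(s.filter fun i => g i = k) := by
        rw [sum_add_distrib, sum_const, smul_eq_mul, sum_boole, Nat.cast_id]
    _ ≤ #s * k + 1 := by omega

namespace SimpleGraph

variable {V : Type*}

noncomputable def neighborhood [Fintype V] (G : SimpleGraph V) (s : Finset V) : Finset V :=
  univ.filter fun w => ∃ u ∈ s, G.Adj u w

namespace IsTree

variable {T : SimpleGraph V}

lemma eq_of_adj_of_dist_add_one (hT : T.IsTree) {r u₁ u₂ w : V} (h₁ : T.Adj u₁ w)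
    (h₂ : T.Adj u₂ w) (hd₁ : T.dist r u₁ + 1 = T.dist r w)
    (hd₂ : T.dist r u₂ + 1 = T.dist r w) : u₁ = u₂ := by
  obtain ⟨p₁, hp₁⟩ := hT.connected.exists_walk_length_eq_dist r u₁
  obtain ⟨p₂, hp₂⟩ := hT.connected.exists_walk_length_eq_dist r u₂
  have hq₁ := (p₁.concat h₁).isPath_of_length_eq_dist (by simp [hp₁, hd₁])
  have hq₂ := (p₂.concat h₂).isPath_of_length_eq_dist (by simp [hp₂, hd₂])
  obtain ⟨h, -⟩ := Walk.concat_inj ((hT.existsUnique_path r w).unique hq₁ hq₂)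
  exact h

lemma exists_adj_dist_add_one_eq (hT : T.IsTree) {r u : V} (hu : u ≠ r) :
    ∃ w, T.Adj u w ∧ T.dist r w + 1 = T.dist r u := by
  obtain ⟨q, hq⟩ := hT.connected.exists_walk_length_eq_dist u r
  have hnil : ¬q.Nil := Walk.not_nil_of_ne hu
  refine ⟨q.snd, q.adj_snd hnil, ?_⟩
  have hle : T.dist r q.snd + 1 ≤ T.dist r u := by
    rw [dist_comm, dist_comm (u := r), ← hq, ← q.length_tail_add_one hnil]
    exact Nat.add_le_add_right (dist_le _) 1
  have := hT.dist_eq_dist_add_one_of_adj r (q.adj_snd hnil)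
  omega

lemma degree_sub_one_le_card_filter_dist [Fintype V] (hT : T.IsTree) (r u : V) :
    T.degree u - 1 ≤ #((T.neighborFinset u).filter fun w => T.dist r u + 1 = T.dist r w) := by
  have hparent : #((T.neighborFinset u).filter fun w => ¬T.dist r u + 1 = T.dist r w) ≤ 1 := by
    refine card_le_one.2 fun w₁ hw₁ w₂ hw₂ => ?_
    simp only [mem_filter, mem_neighborFinset] at hw₁ hw₂
    have h₁ := hT.dist_eq_dist_add_one_of_adj r hw₁.1
    have h₂ := hT.dist_eq_dist_add_one_of_adj r hw₂.1
    exact hT.eq_of_adj_of_dist_add_one (r := r) hw₁.1.symm hw₂.1.symm (by omega) (by omega)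
  have hsplit := card_filter_add_card_filter_not (s := T.neighborFinset u)
    (fun w => T.dist r u + 1 = T.dist r w)
  rw [card_neighborFinset_eq_degree] at hsplit
  omega

theorem sum_degree_sub_one_lt_card_neighborhood [Fintype V] (hT : T.IsTree) {r : V}
    {P : Finset V} (hP : P.Nonempty) (hr : r ∉ P) :
    ∑ u ∈ P, (T.degree u - 1) < #(T.neighborhood P) := by
  -- `C u` is the set of children of `u` when `T` is rooted at `r`.
  set C : V → Finset V := fun u =>
    (T.neighborFinset u).filter fun w => T.dist r u + 1 = T.dist r w
  have hmemC : ∀ {u w}, w ∈ C u ↔ T.Adj u w ∧ T.dist r u + 1 = T.dist r w := by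
    simp [C]
  have hdisj : (P : Set V).PairwiseDisjoint C := by
    intro u₁ _ u₂ _ hne
    refine Finset.disjoint_left.2 fun w hw₁ hw₂ => ?_
    rw [hmemC] at hw₁ hw₂
    exact hne <| hT.eq_of_adj_of_dist_add_one hw₁.1 hw₂.1 hw₁.2 hw₂.2
  obtain ⟨u₀, hu₀, hmin⟩ := P.exists_min_image (T.dist r) hP
  obtain ⟨w₀, hadj₀, hd₀⟩ := hT.exists_adj_dist_add_one_eq (ne_of_mem_of_not_mem hu₀ hr)
  have hw₀ : w₀ ∉ P.biUnion C := by
    simp only [mem_biUnion, not_exists, not_and]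
    intro u hu hw
    have := hmin u hu
    have := (hmemC.1 hw).2
    omega
  have hsub : insert w₀ (P.biUnion C) ⊆ T.neighborhood P := by
    intro w hw
    simp only [neighborhood, mem_filter, mem_univ, true_and]
    rcases mem_insert.1 hw with rfl | hw
    · exact ⟨u₀, hu₀, hadj₀⟩
    · obtain ⟨u, hu, hwu⟩ := mem_biUnion.1 hw
      exact ⟨u, hu, (hmemC.1 hwu).1⟩
  calc ∑ u ∈ P, (T.degree u - 1) ≤ ∑ u ∈ P, #(C u) :=
        sum_le_sum fun u _ => hT.degree_sub_one_le_card_filter_dist r u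
    _ = #(P.biUnion C) := (card_biUnion hdisj).symm
    _ < #(insert w₀ (P.biUnion C)) := by rw [card_insert_of_notMem hw₀]; omega
    _ ≤ #(T.neighborhood P) := card_le_card hsub

end IsTree

end SimpleGraph

section Embedding

variable {V α β : Type*} {f : V → α ⊕ β}

lemma card_filter_isLeft_le [Fintype α] (hinj : f.Injective) (s : Finset V) :
    #(s.filter fun w => (f w).isLeft) ≤ Fintype.card α := by
  calc #(s.filter fun w => (f w).isLeft)
      ≤ #(univ.map (Function.Embedding.inl : α ↪ α ⊕ β)) := by
        refine card_le_card_of_injOn f (fun w hw => ?_) hinj.injOn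
        obtain ⟨a, ha⟩ := Sum.isLeft_iff.1 (mem_filter.1 hw).2
        simp [ha]
    _ = Fintype.card α := by rw [card_map, card_univ]

lemma card_neighborhood_filter_isRight_le [Fintype V] [Fintype β] {T : SimpleGraph V}
    {H₁ : SimpleGraph α} {H₂ : SimpleGraph β} (hinj : f.Injective)
    (hhom : ∀ ⦃a b⦄, T.Adj a b → (graphJoin H₁ H₂).Adj (f a) (f b))
    {P : Finset V} {b : V → β} (hb : ∀ u ∈ P, f u = Sum.inr (b u)) :
    #((T.neighborhood P).filter fun w => (f w).isRight) ≤ ∑ u ∈ P, H₂.degree (b u) := by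
  calc #((T.neighborhood P).filter fun w => (f w).isRight)
      ≤ #((P.biUnion fun u => H₂.neighborFinset (b u)).map Function.Embedding.inr) := by
        refine card_le_card_of_injOn f (fun w hw => ?_) hinj.injOn
        simp only [SimpleGraph.neighborhood, coe_filter, mem_filter, mem_univ, true_and,
          Set.mem_ofPred_eq] at hw
        obtain ⟨⟨u, hu, hadj⟩, hw⟩ := hw
        obtain ⟨c, hc⟩ := Sum.isRight_iff.1 hw
        have hc' : H₂.Adj (b u) c := by
          have := hhom hadj
          rwa [hb u hu, hc] at this
        simpa [hc] using ⟨u, hu, hc'⟩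
    _ ≤ ∑ u ∈ P, #(H₂.neighborFinset (b u)) := by rw [card_map]; exact card_biUnion_le
    _ = ∑ u ∈ P, H₂.degree (b u) := by simp only [SimpleGraph.card_neighborFinset_eq_degree]

end Embedding

theorem embedded_neighbors_forced_into_H1_general {V α β : Type*} [Fintype V] [Fintype α] [Fintype β]
    (T : SimpleGraph V) (hT : T.IsTree) (l δ p : ℕ)
    (A : Finset V)
    (hAB : A.card ≤ Aᶜ.card)
    (hδmin : ∀ v ∈ A, δ ≤ T.degree v)
    (H₁ : SimpleGraph α) (H₂ : SimpleGraph β) (hα : Fintype.card α = l)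
    (hmax : ∀ v : β, H₂.degree v ≤ δ - 1)
    (hone : ∀ u v : β, H₂.degree u = δ - 1 → H₂.degree v = δ - 1 → u = v)
    (f : V → α ⊕ β) (hinj : Function.Injective f)
    (hhom : ∀ ⦃a b⦄, T.Adj a b → (graphJoin H₁ H₂).Adj (f a) (f b))
    (P : Finset V) (hPA : P ⊆ A) (hP : P.card = p)
    (hPright : ∀ u ∈ P, ∃ b : β, f u = Sum.inr b) :
    p ≤ (Finset.univ.filter
          (fun w => (∃ u ∈ P, T.Adj u w) ∧ ∃ a : α, f w = Sum.inl a)).card ∧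
    p ≤ l := by
  have hW : ((T.neighborhood P).filter fun w => (f w).isLeft) =
      univ.filter fun w => (∃ u ∈ P, T.Adj u w) ∧ ∃ a : α, f w = Sum.inl a := by
    simp only [SimpleGraph.neighborhood, filter_filter, Sum.isLeft_iff]
  suffices hpW : p ≤ #((T.neighborhood P).filter fun w => (f w).isLeft) from
    hW ▸ ⟨hpW, hpW.trans (hα ▸ card_filter_isLeft_le hinj _)⟩
  obtain rfl | hPne := P.eq_empty_or_nonempty
  · simp [← hP]
  obtain ⟨r, hr⟩ : ∃ r, r ∉ P := by
    obtain ⟨r, hr⟩ := card_pos.1 (hAB.trans_lt' (card_pos.2 (hPne.mono hPA)))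
    exact ⟨r, fun h => mem_compl.1 hr (hPA h)⟩
  have : Nonempty β := hPne.elim fun u hu => (hPright u hu).nonempty
  choose! b hb using hPright
  have hN : p * (δ - 1) < #(T.neighborhood P) := calc
    p * (δ - 1) = ∑ u ∈ P, (δ - 1) := by rw [sum_const, hP, smul_eq_mul]
    _ ≤ ∑ u ∈ P, (T.degree u - 1) :=
        sum_le_sum fun u hu => Nat.sub_le_sub_right (hδmin u (hPA hu)) 1
    _ < #(T.neighborhood P) := hT.sum_degree_sub_one_lt_card_neighborhood hPne hr
  have hR := card_neighborhood_filter_isRight_le hinj hhom hb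
  have hdeg := sum_add_card_le_card_mul_add_one P (fun u => H₂.degree (b u))
    (fun u _ => hmax (b u))
    (fun u hu v hv hu' hv' => hinj (by rw [hb u hu, hb v hv, hone _ _ hu' hv']))
  have hsplit := card_filter_add_card_filter_not (s := T.neighborhood P) fun w => (f w).isLeft
  simp only [Sum.not_isLeft] at hsplit
  rw [hP] at hdeg
  omega

/-- Let `T` be a tree with bipartition `{A,B}`, `|A| = l+1 ≤ |B|`, each vertex of `A`
of degree at least `δ` in `T`, and suppose an embedding of `T` into the join `H₁ ∨ H₂`
maps a subset `P ⊆ A` with `|P| = p` into the side `H₂`, where `|V(H₁)| = l`,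
`Δ(H₂) ≤ δ−1`, and at most one vertex of `H₂` has degree `δ−1`.  Then at least `p`
vertices of `N_T(P)` are mapped into `V(H₁)`, and consequently `p ≤ l`. -/
theorem embedded_neighbors_forced_into_H1 {V α β : Type*} [Fintype V] [Fintype α] [Fintype β]
    (T : SimpleGraph V) (hT : T.IsTree) (l δ p : ℕ)
    (A : Finset V) (hbip : ∀ ⦃u v⦄, T.Adj u v → (u ∈ A ↔ v ∉ A))
    (hA : A.card = l + 1) (hAB : A.card ≤ Aᶜ.card)
    (hδmin : ∀ v ∈ A, δ ≤ T.degree v)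
    (H₁ : SimpleGraph α) (H₂ : SimpleGraph β) (hα : Fintype.card α = l)
    (hmax : ∀ v : β, H₂.degree v ≤ δ - 1)
    (hone : ∀ u v : β, H₂.degree u = δ - 1 → H₂.degree v = δ - 1 → u = v)
    (f : V → α ⊕ β) (hinj : Function.Injective f)
    (hhom : ∀ ⦃a b⦄, T.Adj a b → (graphJoin H₁ H₂).Adj (f a) (f b))
    (P : Finset V) (hPA : P ⊆ A) (hP : P.card = p)
    (hPright : ∀ u ∈ P, ∃ b : β, f u = Sum.inr b) :
    p ≤ (Finset.univ.filter
          (fun w => (∃ u ∈ P, T.Adj u w) ∧ ∃ a : α, f w = Sum.inl a)).card ∧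
    p ≤ l :=
  embedded_neighbors_forced_into_H1_general T hT l δ p A hAB hδmin H₁ H₂ hα hmax hone f hinj hhom P
    hPA hP hPright
end
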